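/- arXiv:2502.05648 — 9 statements merged into one kernel-verified Lean document; each statement's English description precedes it below -/
import Mathlib

section
/- Let k > 1 be an integer, let S ⊆ ℤ^n, and suppose the subgroup of ℤ^n generated by S contains (kℤ)^n. Let G be a group and let H be the subgroup of G generated by all k-th powers of elements of G. Then H^n ≤ G^S. In particular, if the k-th powers of elements of G generate G, then G^S = G^n. -/
/- `x ↦ g ^ x` is a homomorphism `ℤⁿ → Gⁿ`, so `G^S` contains `g ^ x` for every `x` in the
subgroup generated by `S`, in particular `g ^ (k eᵢ) = eᵢ(g ^ k)` for each coordinate `i`.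
Since `x ↦ eᵢ(x)` is a homomorphism `G → Gⁿ`, all of `eᵢ(H)` lies in `G^S`, and these
coordinate copies of `H` generate `Hⁿ`. -/

/-- For `g` in a group `G` and `x : ℤⁿ`, `g ^ x := (g ^ x 1, ..., g ^ x n) ∈ Gⁿ`. -/
def vecPow {n : ℕ} {G : Type*} [Group G] (g : G) (x : Fin n → ℤ) : Fin n → G :=
  fun i => g ^ x i

/-- `G^S`: the subgroup of `Gⁿ` generated by all `g ^ x` with `g ∈ G` and `x ∈ S ⊆ ℤⁿ`. -/
def latticePower {n : ℕ} (G : Type*) [Group G] (S : Set (Fin n → ℤ)) :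
    Subgroup (Fin n → G) :=
  Subgroup.closure {f | ∃ (g : G) (x : Fin n → ℤ), x ∈ S ∧ f = vecPow g x}

open Subgroup Set

section VecPow

variable {n : ℕ} {G : Type*} [Group G]

@[simp]
lemma vecPow_zero (g : G) : vecPow g (0 : Fin n → ℤ) = 1 :=
  funext fun _ => zpow_zero g

lemma vecPow_add (g : G) (x y : Fin n → ℤ) : vecPow g (x + y) = vecPow g x * vecPow g y :=
  funext fun _ => zpow_add g _ _

lemma vecPow_neg (g : G) (x : Fin n → ℤ) : vecPow g (-x) = (vecPow g x)⁻¹ :=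
  funext fun _ => zpow_neg g _

lemma vecPow_single (g : G) (i : Fin n) (k : ℤ) :
    vecPow g (Pi.single i k) = Pi.mulSingle i (g ^ k) := by
  funext j
  by_cases h : j = i
  · subst h; simp [vecPow]
  · simp [vecPow, h]

lemma vecPow_mem_latticePower {S : Set (Fin n → ℤ)} (g : G) {x : Fin n → ℤ}
    (hx : x ∈ AddSubgroup.closure S) : vecPow g x ∈ latticePower G S := by
  induction hx using AddSubgroup.closure_induction with
  | mem x hx => exact subset_closure ⟨g, x, hx, rfl⟩
  | zero => simp
  | add x y _ _ hx hy => simpa only [vecPow_add] using mul_mem hx hy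
  | neg x _ hx => simpa only [vecPow_neg] using inv_mem hx

lemma pi_closure_zpow_le_latticePower {S : Set (Fin n → ℤ)} {k : ℤ}
    (hS : ∀ i, Pi.single i k ∈ AddSubgroup.closure S) :
    pi univ (fun _ => closure {x : G | ∃ g : G, x = g ^ k}) ≤ latticePower G S := by
  refine pi_le_iff.2 fun i => map_le_iff_le_comap.2 <| (closure_le _).2 ?_
  rintro _ ⟨g, rfl⟩
  simpa [vecPow_single] using vecPow_mem_latticePower g (hS i)

end VecPow

theorem stmt_4_general {n : ℕ} (k : ℤ) (S : Set (Fin n → ℤ))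
    (hS : ∀ v : Fin n → ℤ, (∀ i, k ∣ v i) → v ∈ AddSubgroup.closure S)
    (G : Type*) [Group G] (H : Subgroup G)
    (hH : H = Subgroup.closure {x : G | ∃ g : G, x = g ^ k}) :
    (∀ f : Fin n → G, (∀ i, f i ∈ H) → f ∈ latticePower G S) ∧
      (H = ⊤ → latticePower G S = ⊤) := by
  have hsingle : ∀ i, Pi.single i k ∈ AddSubgroup.closure S := fun i =>
    hS _ fun j => by by_cases h : j = i <;> simp [h]
  have hle : pi univ (fun _ => H) ≤ latticePower G S :=
    hH ▸ pi_closure_zpow_le_latticePower hsingle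
  refine ⟨fun f hf => hle fun i _ => hf i, fun hH_top => top_le_iff.1 ?_⟩
  simpa [hH_top, pi_top] using hle

/-- If `(kℤ)ⁿ` is contained in the subgroup generated by `S`, and `H` is the subgroup of `G`
generated by `k`-th powers, then `Hⁿ ≤ G^S`; in particular if `k`-th powers generate `G`,
then `G^S = Gⁿ`. -/
theorem stmt_4 {n : ℕ} (k : ℤ) (hk : 1 < k) (S : Set (Fin n → ℤ))
    (hS : ∀ v : Fin n → ℤ, (∀ i, k ∣ v i) → v ∈ AddSubgroup.closure S)
    (G : Type*) [Group G] (H : Subgroup G)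
    (hH : H = Subgroup.closure {x : G | ∃ g : G, x = g ^ k}) :
    (∀ f : Fin n → G, (∀ i, f i ∈ H) → f ∈ latticePower G S) ∧
      (H = ⊤ → latticePower G S = ⊤) :=
  stmt_4_general k S hS G H hH
end

section
/- Let S ⊆ ℤ^n, G a group, and K a normal subgroup of G. Then G^S = G^n if and only if K^n ≤ G^S and (G/K)^S = (G/K)^n. -/
/-! A normal subgroup `K` gives the exact sequence `1 → Kⁿ → Gⁿ → (G/K)ⁿ → 1`, under which `G^S`
maps onto `(G/K)^S`; a subgroup is everything exactly when it contains the kernel of a surjection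
and maps onto its target. -/

theorem Subgroup.eq_top_iff_ker_le_and_map_eq_top {G N : Type*} [Group G] [Group N]
    {f : G →* N} (hf : Function.Surjective f) {H : Subgroup G} :
    H = ⊤ ↔ f.ker ≤ H ∧ H.map f = ⊤ := by
  constructor
  · rintro rfl
    exact ⟨le_top, map_top_of_surjective f hf⟩
  · rintro ⟨hker, hmap⟩
    rwa [← MonoidHom.range_eq_top_of_surjective f hf, map_eq_range_iff, codisjoint_iff,
      sup_of_le_left hker] at hmap

theorem MonoidHom.ker_compLeft {G N : Type*} [Group G] [Group N] (f : G →* N) (I : Type*) :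
    (f.compLeft I).ker = Subgroup.pi Set.univ fun _ : I => f.ker := by
  ext g
  simp [MonoidHom.mem_ker, Subgroup.mem_pi, funext_iff]

theorem latticePower_map_compLeft {n : ℕ} {G H : Type*} [Group G] [Group H] {f : G →* H}
    (hf : Function.Surjective f) (S : Set (Fin n → ℤ)) :
    (latticePower G S).map (f.compLeft (Fin n)) = latticePower H S := by
  rw [latticePower, MonoidHom.map_closure, latticePower]
  congr 1
  ext v
  constructor
  · rintro ⟨_, ⟨g, x, hx, rfl⟩, rfl⟩
    exact ⟨f g, x, hx, funext fun i => by simp [vecPow]⟩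
  · rintro ⟨h, x, hx, rfl⟩
    obtain ⟨g, rfl⟩ := hf h
    exact ⟨vecPow g x, ⟨g, x, hx, rfl⟩, funext fun i => by simp [vecPow]⟩

/-- `G^S = Gⁿ` if and only if `Kⁿ ≤ G^S` and `(G/K)^S = (G/K)ⁿ`. -/
theorem stmt_8 {n : ℕ} (S : Set (Fin n → ℤ)) (G : Type*) [Group G]
    (K : Subgroup G) [K.Normal] :
    latticePower G S = ⊤ ↔
      (Subgroup.pi Set.univ (fun _ : Fin n => K) ≤ latticePower G S ∧
        latticePower (G ⧸ K) S = ⊤) := by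
  have hπ := (QuotientGroup.mk'_surjective K).comp_left (α := Fin n)
  rw [Subgroup.eq_top_iff_ker_le_and_map_eq_top (f := (QuotientGroup.mk' K).compLeft (Fin n)) hπ,
    MonoidHom.ker_compLeft, QuotientGroup.ker_mk',
    latticePower_map_compLeft (QuotientGroup.mk'_surjective K)]
end

section
/- Let S ⊆ ℤ^n, G a group, and K a normal subgroup of G. If K^S = K^n and (G/K)^S = (G/K)^n, then G^S = G^n. -/
theorem Subgroup.eq_top_of_map_eq_top_of_ker_le {G N : Type*} [Group G] [Group N]
    {f : G →* N} {H : Subgroup G} (hmap : H.map f = ⊤) (hker : f.ker ≤ H) : H = ⊤ := by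
  have : (⊤ : Subgroup G).map f ≤ H.map f := hmap ▸ le_top
  rw [map_le_map_iff', sup_eq_left.mpr hker, top_sup_eq] at this
  exact top_le_iff.mp this

section
variable {n : ℕ} {G H : Type*} [Group G] [Group H]

theorem compLeft_vecPow (f : G →* H) (g : G) (x : Fin n → ℤ) :
    f.compLeft (Fin n) (vecPow g x) = vecPow (f g) x := by
  ext i; simp [vecPow, MonoidHom.compLeft]

theorem map_latticePower (f : G →* H) (S : Set (Fin n → ℤ)) :
    (latticePower G S).map (f.compLeft (Fin n)) =
      Subgroup.closure {v | ∃ (g : G) (x : Fin n → ℤ), x ∈ S ∧ v = vecPow (f g) x} := by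
  rw [latticePower, MonoidHom.map_closure]
  congr 1
  ext v
  constructor
  · rintro ⟨_, ⟨g, x, hx, rfl⟩, rfl⟩
    exact ⟨g, x, hx, compLeft_vecPow f g x⟩
  · rintro ⟨g, x, hx, rfl⟩
    exact ⟨vecPow g x, ⟨g, x, hx, rfl⟩, compLeft_vecPow f g x⟩

theorem map_latticePower_le (f : G →* H) (S : Set (Fin n → ℤ)) :
    (latticePower G S).map (f.compLeft (Fin n)) ≤ latticePower H S := by
  rw [map_latticePower]
  exact Subgroup.closure_mono fun _ ⟨g, x, hx, hv⟩ => ⟨f g, x, hx, hv⟩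

theorem map_latticePower_of_surjective {f : G →* H} (hf : Function.Surjective f)
    (S : Set (Fin n → ℤ)) :
    (latticePower G S).map (f.compLeft (Fin n)) = latticePower H S := by
  refine le_antisymm (map_latticePower_le f S) ?_
  rw [map_latticePower]
  refine Subgroup.closure_mono fun _ ⟨h, x, hx, hv⟩ => ?_
  obtain ⟨g, rfl⟩ := hf h
  exact ⟨g, x, hx, hv⟩

end

theorem ker_compLeft_mk'_le_map {G : Type*} [Group G] (K : Subgroup G) [K.Normal] (ι : Type*) :
    ((QuotientGroup.mk' K).compLeft ι).ker ≤ (⊤ : Subgroup (ι → K)).map (K.subtype.compLeft ι) := by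
  intro v hv
  have hvK : ∀ i, v i ∈ K := fun i => (QuotientGroup.eq_one_iff _).mp (congrFun hv i)
  exact ⟨fun i => ⟨v i, hvK i⟩, trivial, rfl⟩

/-- If `K^S = Kⁿ` (inside `Kⁿ`) and `(G/K)^S = (G/K)ⁿ`, then `G^S = Gⁿ`. -/
theorem stmt_9 {n : ℕ} (S : Set (Fin n → ℤ)) (G : Type*) [Group G]
    (K : Subgroup G) [K.Normal]
    (hK : latticePower (↥K) S = ⊤) (hQ : latticePower (G ⧸ K) S = ⊤) :
    latticePower G S = ⊤ := by
  refine Subgroup.eq_top_of_map_eq_top_of_ker_le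
    (f := (QuotientGroup.mk' K).compLeft (Fin n)) ?_ ?_
  · rw [map_latticePower_of_surjective (QuotientGroup.mk'_surjective K), hQ]
  · calc _ ≤ (⊤ : Subgroup (Fin n → K)).map (K.subtype.compLeft (Fin n)) :=
          ker_compLeft_mk'_le_map K (Fin n)
      _ = (latticePower K S).map (K.subtype.compLeft (Fin n)) := by rw [hK]
      _ ≤ latticePower G S := map_latticePower_le K.subtype S
end

section
/- Suppose Γ is a finite simple graph with distinct vertices i and j having the same closed neighborhood (B(i) = B(j)). Let Γ − j be the induced subgraph on all vertices except j. Then G^Γ is isomorphic to G^{Γ−j} for every group G. -/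
open Classical in
/-- "Clicking" vertex `v` with `g`: the element of `Gⁿ` with `g` on the closed
neighborhood `B(v)` of `v` and the identity elsewhere. -/
noncomputable def click {V : Type*} (Γ : SimpleGraph V) {G : Type*} [Group G]
    (g : G) (v : V) : V → G :=
  fun w => if w = v ∨ Γ.Adj v w then g else 1

/-- `G^Γ`: the subgroup of `Gⁿ` generated by all clicks. -/
noncomputable def graphPower {V : Type*} (Γ : SimpleGraph V) (G : Type*) [Group G] :
    Subgroup (V → G) :=
  Subgroup.closure {f | ∃ (g : G) (v : V), f = click Γ g v}

/-!
Restricting to the vertices other than `j` maps the generating clicks of `G^Γ` onto those of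
`G^(Γ − j)`, since the click at `j` coincides with the click at its twin `i`. It is injective on
`G^Γ` because every click, hence every element of `G^Γ`, takes the same value at `i` and at `j`.
The same argument applies to the restriction to any vertex set `S` that contains, for every
vertex, one with the same closed neighborhood.
-/

namespace SimpleGraph

variable {V : Type*} (Γ : SimpleGraph V) {G : Type*} [Group G]

def closedNbhd (v : V) : Set V := insert v (Γ.neighborSet v)

variable {Γ}

theorem mem_closedNbhd {v w : V} : w ∈ Γ.closedNbhd v ↔ w = v ∨ Γ.Adj v w := Iff.rfl

theorem mem_closedNbhd_comm {u v : V} : u ∈ Γ.closedNbhd v ↔ v ∈ Γ.closedNbhd u := by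
  simp only [mem_closedNbhd, eq_comm, Γ.adj_comm]

theorem mem_induce_closedNbhd {S : Set V} {v w : S} :
    w ∈ (Γ.induce S).closedNbhd v ↔ (w : V) ∈ Γ.closedNbhd v := by
  simp [mem_closedNbhd, Subtype.ext_iff]

open Classical in
theorem click_apply (g : G) (v w : V) :
    click Γ g v w = if w ∈ Γ.closedNbhd v then g else 1 := by
  simp only [click, mem_closedNbhd]

theorem click_eq_of_closedNbhd_eq {u v : V} (huv : Γ.closedNbhd u = Γ.closedNbhd v) (g : G) :
    click Γ g u = click Γ g v := by
  funext w
  rw [click_apply, click_apply, huv]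

theorem click_apply_eq_of_closedNbhd_eq {u v : V} (huv : Γ.closedNbhd u = Γ.closedNbhd v)
    (g : G) (w : V) : click Γ g w u = click Γ g w v := by
  rw [click_apply, click_apply, mem_closedNbhd_comm, huv, mem_closedNbhd_comm]

theorem apply_eq_of_mem_graphPower {u v : V} (huv : Γ.closedNbhd u = Γ.closedNbhd v)
    {f : V → G} (hf : f ∈ graphPower Γ G) : f u = f v := by
  have : graphPower Γ G ≤ (Pi.evalMonoidHom (fun _ => G) u).eqLocus
      (Pi.evalMonoidHom (fun _ => G) v) := by
    refine (Subgroup.closure_le _).mpr ?_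
    rintro _ ⟨g, w, rfl⟩
    exact click_apply_eq_of_closedNbhd_eq huv g w
  exact this hf

variable (G) in
def restrictHom (S : Set V) : (V → G) →* (S → G) :=
  MonoidHom.pi fun w => Pi.evalMonoidHom (fun _ => G) w.val

theorem restrictHom_apply (S : Set V) (f : V → G) (w : S) : restrictHom G S f w = f w := rfl

theorem restrictHom_click {S : Set V} (g : G) {v : V} (hv : v ∈ S) :
    restrictHom G S (click Γ g v) = click (Γ.induce S) g ⟨v, hv⟩ := by
  funext w
  rw [restrictHom_apply, click_apply, click_apply, mem_induce_closedNbhd]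

variable {S : Set V} (hS : ∀ v, ∃ u ∈ S, Γ.closedNbhd v = Γ.closedNbhd u)
include hS

theorem map_restrictHom_graphPower :
    (graphPower Γ G).map (restrictHom G S) = graphPower (Γ.induce S) G := by
  rw [graphPower, MonoidHom.map_closure, graphPower]
  congr 1
  ext f
  constructor
  · rintro ⟨_, ⟨g, v, rfl⟩, rfl⟩
    obtain ⟨u, hu, huv⟩ := hS v
    exact ⟨g, ⟨u, hu⟩, by rw [click_eq_of_closedNbhd_eq huv, restrictHom_click]⟩
  · rintro ⟨g, ⟨v, hv⟩, rfl⟩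
    exact ⟨click Γ g v, ⟨g, v, rfl⟩, restrictHom_click g hv⟩

theorem injOn_restrictHom_graphPower :
    Set.InjOn (restrictHom G S) (graphPower Γ G) := by
  intro f hf f' hf' hff'
  funext v
  obtain ⟨u, hu, huv⟩ := hS v
  rw [apply_eq_of_mem_graphPower huv hf, apply_eq_of_mem_graphPower huv hf']
  exact congrFun hff' ⟨u, hu⟩

noncomputable def graphPowerEquivInduce : graphPower Γ G ≃* graphPower (Γ.induce S) G :=
  (MulEquiv.ofBijective ((restrictHom G S).subgroupMap (graphPower Γ G))
    ⟨fun f f' h => Subtype.ext (injOn_restrictHom_graphPower hS f.2 f'.2 (congrArg Subtype.val h)),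
      (restrictHom G S).subgroupMap_surjective _⟩).trans
    (MulEquiv.subgroupCongr (map_restrictHom_graphPower hS))

end SimpleGraph

theorem stmt_11_general {V : Type*} (Γ : SimpleGraph V) (i j : V) (hij : i ≠ j)
    (hB : ∀ w, (w = i ∨ Γ.Adj i w) ↔ (w = j ∨ Γ.Adj j w))
    (G : Type*) [Group G] :
    Nonempty ((graphPower Γ G) ≃* graphPower (Γ.induce {w | w ≠ j}) G) := by
  have hji : Γ.closedNbhd j = Γ.closedNbhd i := (Set.ext hB).symm
  refine ⟨SimpleGraph.graphPowerEquivInduce fun v => ?_⟩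
  by_cases hv : v = j
  · exact ⟨i, hij, hv ▸ hji⟩
  · exact ⟨v, hv, rfl⟩

/-- If distinct vertices `i` and `j` have the same closed neighborhood, then
`G^Γ ≅ G^(Γ − j)`, where `Γ − j` is the induced subgraph on the other vertices. -/
theorem stmt_11 {V : Type*} [Fintype V] (Γ : SimpleGraph V) (i j : V) (hij : i ≠ j)
    (hB : ∀ w, (w = i ∨ Γ.Adj i w) ↔ (w = j ∨ Γ.Adj j w))
    (G : Type*) [Group G] :
    Nonempty ((graphPower Γ G) ≃* graphPower (Γ.induce {w | w ≠ j}) G) :=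
  stmt_11_general Γ i j hij hB G
end

section
/- Let Γ = P_n be the path graph on n vertices. If n ≡ 2 (mod 3), then the elementary divisors of the activation matrix A_Γ = Adj(Γ) + I_n are (1, ..., 1, 0) with n−1 ones; otherwise all n elementary divisors are 1, so ℤ^Γ = ℤ^n. -/
/-!
Splitting off the first three vertices writes `P_{3+m}` as a block matrix with unimodular
corner `P_3`, joined to `P_m` by the block `c` of the single edge `2 — 3`. Its Schur complement is
`P_m - cᵀ P_3⁻¹ c = P_m`, because the corner entry `(P_3⁻¹)₂₂` vanishes (it is the cofactor
`det P_2 = 0`, up to sign). Hence `P_{3+m}` is Smith equivalent to `I_3 ⊕ P_m`, and the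
period-three pattern follows from `P_0`, `P_1` and `P_2 = [[1, 1], [1, 1]]`.
-/

/-- The activation matrix `A_Γ = Adj(Γ) + I` of the path graph `P_n`
(vertex `i` adjacent to `i+1`). -/
def pathActivation (n : ℕ) : Matrix (Fin n) (Fin n) ℤ :=
  Matrix.of fun i j =>
    if i = j ∨ (i : ℕ) + 1 = (j : ℕ) ∨ (j : ℕ) + 1 = (i : ℕ) then 1 else 0

namespace Matrix

variable {R : Type*} [CommRing R] {l m n o : Type*} [Fintype l] [Fintype m] [Fintype n] [Fintype o]
  [DecidableEq l] [DecidableEq m] [DecidableEq n] [DecidableEq o]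

def SmithEquiv (A B : Matrix m n R) : Prop :=
  ∃ (U : Matrix m m R) (V : Matrix n n R), IsUnit U.det ∧ IsUnit V.det ∧ U * A * V = B

namespace SmithEquiv

theorem refl (A : Matrix m n R) : SmithEquiv A A :=
  ⟨1, 1, by simp, by simp, by simp⟩

theorem symm {A B : Matrix m n R} (h : SmithEquiv A B) : SmithEquiv B A := by
  obtain ⟨U, V, hU, hV, rfl⟩ := h
  refine ⟨U⁻¹, V⁻¹, isUnit_nonsing_inv_det U hU, isUnit_nonsing_inv_det V hV, ?_⟩
  rw [Matrix.mul_assoc U, nonsing_inv_mul_cancel_left _ _ hU, mul_nonsing_inv_cancel_right _ _ hV]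

theorem trans {A B C : Matrix m n R} (h₁ : SmithEquiv A B) (h₂ : SmithEquiv B C) :
    SmithEquiv A C := by
  obtain ⟨U₁, V₁, hU₁, hV₁, rfl⟩ := h₁
  obtain ⟨U₂, V₂, hU₂, hV₂, rfl⟩ := h₂
  refine ⟨U₂ * U₁, V₁ * V₂, by simpa using hU₂.mul hU₁, by simpa using hV₁.mul hV₂, ?_⟩
  simp only [Matrix.mul_assoc]

theorem fromBlocks_zero {A B : Matrix m n R} {C D : Matrix l o R} (h₁ : SmithEquiv A B)
    (h₂ : SmithEquiv C D) : SmithEquiv (fromBlocks A 0 0 C) (fromBlocks B 0 0 D) := by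
  obtain ⟨U₁, V₁, hU₁, hV₁, rfl⟩ := h₁
  obtain ⟨U₂, V₂, hU₂, hV₂, rfl⟩ := h₂
  refine ⟨fromBlocks U₁ 0 0 U₂, fromBlocks V₁ 0 0 V₂, ?_, ?_, ?_⟩
  · simpa [det_fromBlocks_zero₁₂] using hU₁.mul hU₂
  · simpa [det_fromBlocks_zero₁₂] using hV₁.mul hV₂
  · simp [fromBlocks_multiply]

theorem submatrix {m' n' : Type*} [Fintype m'] [Fintype n'] [DecidableEq m'] [DecidableEq n']
    {A B : Matrix m n R} (h : SmithEquiv A B) (e : m' ≃ m) (f : n' ≃ n) :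
    SmithEquiv (A.submatrix e f) (B.submatrix e f) := by
  obtain ⟨U, V, hU, hV, rfl⟩ := h
  refine ⟨U.submatrix e e, V.submatrix f f, by rwa [det_submatrix_equiv_self],
    by rwa [det_submatrix_equiv_self], ?_⟩
  rw [submatrix_mul_equiv, submatrix_mul_equiv]

theorem submatrix_iff {m' n' : Type*} [Fintype m'] [Fintype n'] [DecidableEq m'] [DecidableEq n']
    {A B : Matrix m n R} (e : m' ≃ m) (f : n' ≃ n) :
    SmithEquiv (A.submatrix e f) (B.submatrix e f) ↔ SmithEquiv A B := by
  refine ⟨fun h => ?_, fun h => h.submatrix e f⟩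
  simpa using h.submatrix e.symm f.symm

theorem fromBlocks_of_invertible₁₁ (A : Matrix m m R) (B : Matrix m n R) (C : Matrix l m R)
    (D : Matrix l n R) [Invertible A] :
    SmithEquiv (fromBlocks A B C D) (fromBlocks 1 0 0 (D - C * ⅟A * B)) := by
  have hfactor : SmithEquiv (fromBlocks A 0 0 (D - C * ⅟A * B)) (fromBlocks A B C D) := by
    exact ⟨fromBlocks 1 0 (C * ⅟A) 1, fromBlocks 1 (⅟A * B) 0 1, by simp, by simp,
      (fromBlocks_eq_of_invertible₁₁ A B C D).symm⟩
  have hA : SmithEquiv A 1 := ⟨⅟A, 1, isUnit_det_of_invertible _, by simp, by simp⟩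
  exact hfactor.symm.trans (hA.fromBlocks_zero (refl _))

end SmithEquiv

end Matrix

open Matrix

def pathCoupling (k m : ℕ) : Matrix (Fin k) (Fin m) ℤ :=
  Matrix.of fun i j => if (i : ℕ) + 1 = k ∧ (j : ℕ) = 0 then 1 else 0

theorem pathActivation_submatrix_finSumFinEquiv (k m : ℕ) :
    (pathActivation (k + m)).submatrix finSumFinEquiv finSumFinEquiv =
      fromBlocks (pathActivation k) (pathCoupling k m) (pathCoupling k m)ᵀ (pathActivation m) := by
  ext (i | i) (j | j) <;>
    simp only [submatrix_apply, fromBlocks_apply₁₁, fromBlocks_apply₁₂, fromBlocks_apply₂₁,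
      fromBlocks_apply₂₂, transpose_apply, pathActivation, pathCoupling, of_apply,
      finSumFinEquiv_apply_left, finSumFinEquiv_apply_right, Fin.ext_iff, Fin.val_castAdd,
      Fin.val_natAdd] <;>
    split_ifs <;> omega

instance : Invertible (pathActivation 3) :=
  invertibleOfRightInverse _ !![0, 1, -1; 1, -1, 1; -1, 1, 0] (by decide)

theorem invOf_pathActivation_three :
    ⅟(pathActivation 3) = !![0, 1, -1; 1, -1, 1; -1, 1, 0] :=
  rfl

theorem pathCoupling_transpose_mul_invOf_mul (m : ℕ) :
    (pathCoupling 3 m)ᵀ * ⅟(pathActivation 3) * pathCoupling 3 m = 0 := by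
  rw [invOf_pathActivation_three]
  ext i j
  simp [mul_apply, Fin.sum_univ_three, pathCoupling]

def pathSmithForm (n : ℕ) : Matrix (Fin n) (Fin n) ℤ :=
  diagonal fun i => if n % 3 = 2 ∧ (i : ℕ) = n - 1 then 0 else 1

theorem pathSmithForm_submatrix_finSumFinEquiv (m : ℕ) :
    (pathSmithForm (3 + m)).submatrix finSumFinEquiv finSumFinEquiv =
      fromBlocks 1 0 0 (pathSmithForm m) := by
  rw [pathSmithForm, submatrix_diagonal_equiv, pathSmithForm, ← diagonal_one, fromBlocks_diagonal]
  congr 1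
  ext (i | i) <;>
    simp only [Function.comp_apply, finSumFinEquiv_apply_left, finSumFinEquiv_apply_right,
      Fin.val_castAdd, Fin.val_natAdd, Sum.elim_inl, Sum.elim_inr] <;>
    split_ifs <;> omega

theorem smithEquiv_pathActivation : ∀ n, SmithEquiv (pathActivation n) (pathSmithForm n)
  | 0 => ⟨1, 1, by decide, by decide, by decide⟩
  | 1 => ⟨1, 1, by decide, by decide, by decide⟩
  | 2 => ⟨!![1, 0; -1, 1], !![1, -1; 0, 1], by decide, by decide, by decide⟩
  | m + 3 => by
    have hschur := SmithEquiv.fromBlocks_of_invertible₁₁ (pathActivation 3) (pathCoupling 3 m)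
      (pathCoupling 3 m)ᵀ (pathActivation m)
    rw [pathCoupling_transpose_mul_invOf_mul, sub_zero] at hschur
    rw [Nat.add_comm, ← SmithEquiv.submatrix_iff finSumFinEquiv finSumFinEquiv,
      pathActivation_submatrix_finSumFinEquiv, pathSmithForm_submatrix_finSumFinEquiv]
    exact hschur.trans ((SmithEquiv.refl 1).fromBlocks_zero (smithEquiv_pathActivation m))

/-- The elementary divisors of the path graph `P_n` are `(1^{n-1}, 0)` when `n ≡ 2 (mod 3)`
and `(1^n)` otherwise: there is a Smith normal form decomposition with this diagonal. -/
theorem stmt_12 (n : ℕ) :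
    ∃ U V : Matrix (Fin n) (Fin n) ℤ, IsUnit U.det ∧ IsUnit V.det ∧
      U * pathActivation n * V =
        Matrix.diagonal (fun i : Fin n =>
          if n % 3 = 2 ∧ (i : ℕ) = n - 1 then 0 else 1) :=
  smithEquiv_pathActivation n
end

section
/- Let Γ = C_n be the cycle graph on n vertices (n ≥ 3). If 3 divides n, then the elementary divisors of A_Γ = Adj(Γ) + I_n are (1^{n−2}, 0, 0); otherwise they are (1^{n−1}, 3). -/
/-!
Write `eᵢ` for the standard basis of `ℤⁿ`, indexed by `Fin n = ℤ/n`. Since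
`(A x)ᵢ = x_{i-1} + xᵢ + x_{i+1}`, the columns `A e_{j+1} = e_j + e_{j+1} + e_{j+2}` for
`j < n - 2` are those of a lower unitriangular matrix, and everything is decided by two further
vectors: if `A u = d₁ (e_{-2} + β e_{-1})` and `A v = d₂ e_{-1}` with `u_{-1} = 0` and
`u₀ v_{-1} = ±1`, then `V = [e_1, …, e_{n-2}, u, v]` is unimodular and
`A V = B · diag(1, …, 1, d₁, d₂)` with `B` unitriangular.

Such `u, v` come from `3`-periodic vectors: three consecutive entries of one add up to its period
sum, so when that sum is `0` the image under `A` is supported on the two rows `0` and `-1` where the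
period wraps around `ℤ/n`, and vanishes when `3 ∣ n`. This gives a kernel of rank two for `3 ∣ n`,
and otherwise `3 e_{-1}` and, after adding `e_{-1}`, the vector `e_{-2} + β e_{-1}`.
-/

/-- The activation matrix `A_Γ = Adj(Γ) + I` of the cycle graph `C_n`
(vertex `i` adjacent to `i ± 1 (mod n)`). -/
def cycleActivation (n : ℕ) : Matrix (Fin n) (Fin n) ℤ :=
  Matrix.of fun i j =>
    if i = j ∨ ((i : ℕ) + 1) % n = (j : ℕ) ∨ ((j : ℕ) + 1) % n = (i : ℕ) then 1 else 0

open Matrix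

namespace Fin

variable {n : ℕ} [NeZero n]

theorem val_neg_one : ((-1 : Fin n) : ℕ) = n - 1 := by
  rw [Fin.val_neg', val_one']
  rcases Nat.lt_or_ge 1 n with h | h
  · rw [Nat.mod_eq_of_lt h, Nat.mod_eq_of_lt (by omega)]
  · obtain rfl : n = 1 := by have := NeZero.ne n; omega
    rfl

theorem val_neg_two (hn : 2 < n) : ((-2 : Fin n) : ℕ) = n - 2 := by
  rw [Fin.val_neg', coe_ofNat_eq_mod, Nat.mod_eq_of_lt hn, Nat.mod_eq_of_lt (by omega)]

theorem val_one_of_one_lt (hn : 1 < n) : ((1 : Fin n) : ℕ) = 1 := by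
  rw [val_one', Nat.mod_eq_of_lt hn]

theorem neg_one_sub_one : (-1 : Fin n) - 1 = -2 := by
  have h : (1 : Fin n) + 1 = 2 := by
    ext; simp only [val_add, coe_ofNat_eq_mod, Nat.add_mod_mod, Nat.mod_add_mod]
  rw [sub_eq_add_neg, ← neg_add, h]

theorem sub_one_ne_self (hn : 1 < n) (i : Fin n) : i - 1 ≠ i := by
  rw [ne_eq, sub_eq_self, Fin.ext_iff, val_one', Nat.mod_eq_of_lt hn]
  simp

theorem sub_one_ne_add_one (hn : 2 < n) (i : Fin n) : i - 1 ≠ i + 1 := by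
  rw [ne_eq, sub_eq_iff_eq_add, add_assoc, left_eq_add, Fin.ext_iff, val_add, val_one',
    Nat.mod_eq_of_lt (by omega : 1 < n), Nat.mod_eq_of_lt (by omega : 1 + 1 < n)]
  simp

theorem cast_val_sub_one {R : Type*} [AddCommGroupWithOne R] (i : Fin n) :
    (((i - 1 : Fin n) : ℕ) : R) = (i : ℕ) - 1 + if i = 0 then (n : R) else 0 := by
  rcases eq_or_ne i 0 with rfl | hi
  · rw [zero_sub, val_neg_one, Nat.cast_sub NeZero.one_le, if_pos rfl, val_zero, Nat.cast_zero,
      Nat.cast_one]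
    abel
  · rw [if_neg hi, val_sub_one_of_ne_zero hi,
      Nat.cast_sub (Nat.one_le_iff_ne_zero.2 (val_ne_of_ne hi)), add_zero, Nat.cast_one]

theorem cast_val_add_one {R : Type*} [AddCommGroupWithOne R] (i : Fin n) :
    (((i + 1 : Fin n) : ℕ) : R) = (i : ℕ) + 1 - if i = -1 then (n : R) else 0 := by
  rcases eq_or_ne i (-1) with rfl | hi
  · rw [neg_add_cancel, val_neg_one, Nat.cast_sub NeZero.one_le, if_pos rfl, val_zero,
      Nat.cast_zero, Nat.cast_one]
    abel
  · have : (i : ℕ) + 1 < n := by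
      have := i.isLt; have := val_neg_one (n := n); rw [ne_eq, Fin.ext_iff] at hi; omega
    rw [if_neg hi, sub_zero, val_add_one_of_lt' this]; push_cast; rfl

end Fin

theorem ZMod.sum_univ_three_eq {M : Type*} [AddCommMonoid M] (f : ZMod 3 → M) (a : ZMod 3) :
    ∑ b, f b = f (a - 1) + f a + f (a + 1) := by
  calc ∑ b, f b = ∑ b : ZMod 3, f (b + (a - 1)) :=
        (Fintype.sum_equiv (Equiv.addRight (a - 1)) _ f (fun _ => rfl)).symm
    _ = f (0 + (a - 1)) + f (1 + (a - 1)) + f (2 + (a - 1)) := Fin.sum_univ_three _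
    _ = f (a - 1) + f a + f (a + 1) := by ring_nf

def Matrix.Equivalent {ι R : Type*} [Fintype ι] [DecidableEq ι] [CommRing R]
    (M N : Matrix ι ι R) : Prop :=
  ∃ U V : Matrix ι ι R, IsUnit U.det ∧ IsUnit V.det ∧ U * M * V = N

def periodicVec {n : ℕ} (p : ZMod 3 → ℤ) : Fin n → ℤ := fun i => p (i : ℕ)

section CycleActivation

variable {n : ℕ} [NeZero n]

theorem cycleActivation_apply (i j : Fin n) :
    cycleActivation n i j = if i = j ∨ i + 1 = j ∨ j + 1 = i then 1 else 0 := by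
  simp only [cycleActivation, of_apply, Fin.ext_iff, Fin.val_add, Fin.val_one', Nat.add_mod_mod]

theorem cycleActivation_row (hn : 3 ≤ n) (i : Fin n) :
    cycleActivation n i = Pi.single (i - 1) 1 + Pi.single i 1 + Pi.single (i + 1) 1 := by
  have h₁ := Fin.sub_one_ne_self (by omega) i
  have h₂ := Fin.sub_one_ne_self (by omega) (i + 1)
  have h₃ := Fin.sub_one_ne_add_one hn i
  rw [add_sub_cancel_right] at h₂
  ext j
  simp only [cycleActivation_apply, Pi.add_apply, Pi.single_apply, ← eq_sub_iff_add_eq]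
  split_ifs <;> grind

theorem cycleActivation_mulVec (hn : 3 ≤ n) (x : Fin n → ℤ) (i : Fin n) :
    (cycleActivation n *ᵥ x) i = x (i - 1) + x i + x (i + 1) := by
  simp only [mulVec, cycleActivation_row hn, add_dotProduct, single_dotProduct, one_mul]

theorem cycleActivation_mulVec_single (hn : 3 ≤ n) (k : Fin n) :
    cycleActivation n *ᵥ Pi.single k 1 =
      Pi.single (k - 1) 1 + Pi.single k 1 + Pi.single (k + 1) 1 := by
  ext i
  simp only [cycleActivation_mulVec hn, Pi.add_apply, Pi.single_apply, sub_eq_iff_eq_add,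
    ← eq_sub_iff_add_eq]
  abel

theorem periodicVec_zero (p : ZMod 3 → ℤ) : periodicVec (n := n) p 0 = p 0 := by
  simp [periodicVec]

theorem periodicVec_neg_one (p : ZMod 3 → ℤ) : periodicVec (n := n) p (-1) = p (n - 1) := by
  rw [periodicVec, Fin.val_neg_one, Nat.cast_sub NeZero.one_le, Nat.cast_one]

theorem cycleActivation_mulVec_periodicVec (hn : 3 ≤ n) {p : ZMod 3 → ℤ} {c₀ c₁ : ℤ}
    (hp : ∑ a, p a = 0) (h₀ : p (n - 1) - p (-1) = c₀) (h₁ : p 0 - p n = c₁) :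
    cycleActivation n *ᵥ periodicVec p = c₀ • Pi.single 0 1 + c₁ • Pi.single (-1) 1 := by
  subst h₀ h₁
  have hne : (-1 : Fin n) ≠ 0 := by simpa using Fin.sub_one_ne_self (by omega) (0 : Fin n)
  ext i
  simp only [cycleActivation_mulVec hn, periodicVec, Fin.cast_val_sub_one, Fin.cast_val_add_one,
    Pi.add_apply, Pi.smul_apply, Pi.single_apply]
  rcases eq_or_ne i 0 with rfl | hi₀
  · have hs := (ZMod.sum_univ_three_eq p 0).symm.trans hp
    simp only [Fin.val_zero, Nat.cast_zero, zero_sub, ↓reduceIte, zero_add, hne.symm, sub_zero,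
      Int.zsmul_eq_mul, mul_one, mul_zero, add_zero]
    ring_nf at hs ⊢
    linarith
  rcases eq_or_ne i (-1) with rfl | hi₁
  · have hs := (ZMod.sum_univ_three_eq p (n - 1)).symm.trans hp
    simp only [Fin.val_neg_one, Nat.cast_sub NeZero.one_le, Nat.cast_one, hne, ↓reduceIte,
      add_zero, sub_add_cancel, sub_self, Int.zsmul_eq_mul, mul_zero, mul_one, zero_add]
    ring_nf at hs ⊢
    linarith
  · simp [hi₀, hi₁, ← ZMod.sum_univ_three_eq p (i : ℕ), hp]

def triangularCols (β : ℤ) (j : Fin n) : Fin n → ℤ :=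
  if j = -2 then Pi.single (-2) 1 + β • Pi.single (-1) 1
  else if j = -1 then Pi.single (-1) 1
  else Pi.single j 1 + Pi.single (j + 1) 1 + Pi.single (j + 1 + 1) 1

def reductionCols (u v : Fin n → ℤ) (j : Fin n) : Fin n → ℤ :=
  if j = -2 then u else if j = -1 then v else Pi.single (j + 1) 1

def diagLastTwo (d₁ d₂ : ℤ) (i : Fin n) : ℤ :=
  if i = -2 then d₁ else if i = -1 then d₂ else 1

theorem det_triangularCols (hn : 3 ≤ n) (β : ℤ) : (of (triangularCols (n := n) β)).det = 1 := by
  have h1 := Fin.val_one_of_one_lt (n := n) (by omega)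
  have h3 := Fin.val_neg_one (n := n)
  have h4 := Fin.val_neg_two hn
  rw [det_of_isUpperTriangular]
  · refine Finset.prod_eq_one fun i _ => ?_
    have := i.isLt
    simp only [of_apply, triangularCols]
    split_ifs <;> simp only [Pi.add_apply, Pi.smul_apply, Pi.single_apply, smul_eq_mul] <;>
      split_ifs <;> simp only [Fin.ext_iff, Fin.val_add_eq_ite, h1, h3, h4] at * <;>
      (try split_ifs at *) <;> omega
  · intro j i hij
    have := i.isLt; have := j.isLt
    simp only [of_apply, triangularCols]
    split_ifs <;> simp only [Pi.add_apply, Pi.smul_apply, Pi.single_apply, smul_eq_mul] <;>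
      split_ifs <;>
      simp only [id_eq, Fin.ext_iff, Fin.lt_def, Fin.val_add_eq_ite, h1, h3, h4] at * <;>
      (try split_ifs at *) <;> omega

/- Taking the entries of each column in the order `1, …, n - 2, 0, -1` (the permutation
`cycleRange (-2)`) makes the matrix lower triangular with diagonal `(1, …, 1, u 0, v (-1))`. -/
theorem isUnit_det_reductionCols (hn : 3 ≤ n) {u v : Fin n → ℤ} (hu : u (-1) = 0)
    (hdet : IsUnit (u 0 * v (-1))) : IsUnit (of (reductionCols u v)).det := by
  have h1 := Fin.val_one_of_one_lt (n := n) (by omega)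
  have h3 := Fin.val_neg_one (n := n)
  have h4 := Fin.val_neg_two hn
  set σ := Fin.cycleRange (-2 : Fin n)
  have hσ : ∀ k : Fin n, ((σ k : Fin n) : ℕ) =
      if (k : ℕ) < n - 2 then (k : ℕ) + 1 else if (k : ℕ) = n - 2 then 0 else k := by
    intro k
    split_ifs with hk hk'
    · exact Fin.coe_cycleRange_of_lt (i := k) (by rw [Fin.lt_def, h4]; exact hk)
    · rw [Fin.cycleRange_of_eq (Fin.ext (by rw [h4]; exact hk')), Fin.val_zero]
    · rw [Fin.cycleRange_of_gt (by rw [Fin.lt_def, h4]; omega)]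
  have hne : (-2 : Fin n) ≠ -1 := by rw [ne_eq, Fin.ext_iff, h3, h4]; omega
  have hW : ((of (reductionCols u v)).submatrix id σ).det = u 0 * v (-1) := by
    rw [det_of_isLowerTriangular]
    · rw [Finset.prod_eq_mul (-2) (-1) hne ?_ (by simp) (by simp)]
      · simp only [submatrix_apply, id_eq, of_apply, reductionCols, if_pos, if_neg hne.symm]
        rw [Fin.cycleRange_of_eq rfl, Fin.cycleRange_of_gt (by rw [Fin.lt_def, h3, h4]; omega)]
      · intro k _ hk
        simp only [submatrix_apply, id_eq, of_apply, reductionCols, if_neg hk.1, if_neg hk.2,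
          Pi.single_apply]
        rw [if_pos (Fin.ext ?_)]
        simp only [ne_eq, Fin.ext_iff, h3, h4] at hk
        rw [hσ, Fin.val_add_eq_ite, h1]
        split_ifs <;> omega
    · intro j k hjk
      rw [OrderDual.toDual_lt_toDual] at hjk
      have := j.isLt; have := k.isLt
      simp only [submatrix_apply, id_eq, of_apply, reductionCols]
      split_ifs with hj hj'
      · rw [show σ k = -1 from Fin.ext ?_, hu]
        rw [Fin.lt_def, hj, h4] at hjk
        rw [hσ, h3]; split_ifs <;> omega
      · rw [Fin.lt_def, hj', h3] at hjk; omega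
      · rw [Pi.single_apply, if_neg]
        simp only [Fin.ext_iff, Fin.lt_def, h3, h4] at hj hj' hjk ⊢
        rw [hσ, Fin.val_add_eq_ite, h1]
        split_ifs <;> first | omega | trivial
  rw [det_permute'] at hW
  exact isUnit_of_mul_isUnit_right (hW ▸ hdet)

theorem cycleActivation_mulVec_reductionCols (hn : 3 ≤ n) {u v : Fin n → ℤ} {β d₁ d₂ : ℤ}
    (hu : cycleActivation n *ᵥ u = d₁ • (Pi.single (-2) 1 + β • Pi.single (-1) 1))
    (hv : cycleActivation n *ᵥ v = d₂ • Pi.single (-1) 1) (j : Fin n) :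
    cycleActivation n *ᵥ reductionCols u v j = diagLastTwo d₁ d₂ j • triangularCols β j := by
  unfold reductionCols triangularCols diagLastTwo
  split_ifs
  · exact hu
  · exact hv
  · rw [one_smul, cycleActivation_mulVec_single hn, add_sub_cancel_right]

theorem cycleActivation_equivalent_diagLastTwo (hn : 3 ≤ n) {u v : Fin n → ℤ} {β d₁ d₂ : ℤ}
    (hu : cycleActivation n *ᵥ u = d₁ • (Pi.single (-2) 1 + β • Pi.single (-1) 1))
    (hv : cycleActivation n *ᵥ v = d₂ • Pi.single (-1) 1) (hu₁ : u (-1) = 0)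
    (hdet : IsUnit (u 0 * v (-1))) :
    (cycleActivation n).Equivalent (diagonal (diagLastTwo d₁ d₂)) := by
  set B := (of (triangularCols (n := n) β))ᵀ
  have hB : IsUnit B.det := by rw [det_transpose, det_triangularCols hn]; exact isUnit_one
  have hAV : cycleActivation n * (of (reductionCols u v))ᵀ = B * diagonal (diagLastTwo d₁ d₂) :=
    calc cycleActivation n * (of (reductionCols u v))ᵀ
        = (of fun j => cycleActivation n *ᵥ reductionCols u v j)ᵀ := rfl
      _ = (of fun j => diagLastTwo d₁ d₂ j • triangularCols β j)ᵀ := by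
        simp only [cycleActivation_mulVec_reductionCols hn hu hv]
      _ = B * diagonal (diagLastTwo d₁ d₂) := by
        ext i j; simp [B, mul_diagonal, mul_comm]
  refine ⟨B⁻¹, _, isUnit_nonsing_inv_det B hB,
    (det_transpose (of (reductionCols u v))).symm ▸ isUnit_det_reductionCols hn hu₁ hdet, ?_⟩
  rw [Matrix.mul_assoc, hAV, ← Matrix.mul_assoc, nonsing_inv_mul B hB, Matrix.one_mul]

theorem cycleActivation_equivalent_of_natCast_eq_zero (hn : 3 ≤ n) (hr : (n : ZMod 3) = 0) :
    (cycleActivation n).Equivalent (diagonal (diagLastTwo 0 0)) := by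
  let p : ZMod 3 → ℤ := ![1, -1, 0]
  let q : ZMod 3 → ℤ := ![0, -1, 1]
  refine cycleActivation_equivalent_diagLastTwo hn (β := 0) (u := periodicVec p)
    (v := periodicVec q) ?_ ?_ ?_ ?_
  · rw [cycleActivation_mulVec_periodicVec hn (c₀ := 0) (c₁ := 0) (by decide) (by rw [hr]; decide)
      (by rw [hr]; decide)]
    simp
  · rw [cycleActivation_mulVec_periodicVec hn (c₀ := 0) (c₁ := 0) (by decide) (by rw [hr]; decide)
      (by rw [hr]; decide)]
    simp
  · rw [periodicVec_neg_one, hr]; decide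
  · rw [periodicVec_zero, periodicVec_neg_one, hr, Int.isUnit_iff]; decide

theorem cycleActivation_equivalent_of_natCast_eq_one (hn : 3 ≤ n) (hr : (n : ZMod 3) = 1) :
    (cycleActivation n).Equivalent (diagonal (diagLastTwo 1 3)) := by
  have h0 : (0 : Fin n) ≠ -1 := by simpa using (Fin.sub_one_ne_self (by omega) (0 : Fin n)).symm
  let p : ZMod 3 → ℤ := ![-1, 1, 0]
  let q : ZMod 3 → ℤ := ![1, -2, 1]
  refine cycleActivation_equivalent_diagLastTwo hn (β := -1)
    (u := Pi.single (-1) 1 + periodicVec p) (v := periodicVec q) ?_ ?_ ?_ ?_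
  · rw [mulVec_add, cycleActivation_mulVec_single hn, Fin.neg_one_sub_one, neg_add_cancel,
      cycleActivation_mulVec_periodicVec hn (c₀ := -1) (c₁ := -2) (by decide) (by rw [hr]; decide)
      (by rw [hr]; decide)]
    module
  · rw [cycleActivation_mulVec_periodicVec hn (c₀ := 0) (c₁ := 3) (by decide) (by rw [hr]; decide)
      (by rw [hr]; decide)]
    module
  · rw [Pi.add_apply, Pi.single_eq_same, periodicVec_neg_one, hr]; decide
  · rw [Pi.add_apply, Pi.single_eq_of_ne h0, periodicVec_zero, periodicVec_neg_one, hr,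
      Int.isUnit_iff]; decide

theorem cycleActivation_equivalent_of_natCast_eq_two (hn : 3 ≤ n) (hr : (n : ZMod 3) = 2) :
    (cycleActivation n).Equivalent (diagonal (diagLastTwo 1 3)) := by
  have h0 : (0 : Fin n) ≠ -1 := by simpa using (Fin.sub_one_ne_self (by omega) (0 : Fin n)).symm
  let p : ZMod 3 → ℤ := ![1, -1, 0]
  let q : ZMod 3 → ℤ := ![2, -1, -1]
  refine cycleActivation_equivalent_diagLastTwo hn (β := 2)
    (u := Pi.single (-1) 1 + periodicVec p) (v := periodicVec q) ?_ ?_ ?_ ?_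
  · rw [mulVec_add, cycleActivation_mulVec_single hn, Fin.neg_one_sub_one, neg_add_cancel,
      cycleActivation_mulVec_periodicVec hn (c₀ := -1) (c₁ := 1) (by decide) (by rw [hr]; decide)
      (by rw [hr]; decide)]
    module
  · rw [cycleActivation_mulVec_periodicVec hn (c₀ := 0) (c₁ := 3) (by decide) (by rw [hr]; decide)
      (by rw [hr]; decide)]
    module
  · rw [Pi.add_apply, Pi.single_eq_same, periodicVec_neg_one, hr]; decide
  · rw [Pi.add_apply, Pi.single_eq_of_ne h0, periodicVec_zero, periodicVec_neg_one, hr,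
      Int.isUnit_iff]; decide

theorem ite_three_dvd_eq_diagLastTwo (hn : 3 ≤ n) :
    (fun i : Fin n => if 3 ∣ n then (if n - 2 ≤ (i : ℕ) then (0 : ℤ) else 1)
      else (if (i : ℕ) = n - 1 then 3 else 1)) =
      if 3 ∣ n then diagLastTwo 0 0 else diagLastTwo 1 3 := by
  have h3 := Fin.val_neg_one (n := n)
  have h4 := Fin.val_neg_two hn
  ext i
  have := i.isLt
  split_ifs <;> simp only [diagLastTwo, Fin.ext_iff, h3, h4] <;> split_ifs <;> omega

end CycleActivation

/-- The elementary divisors of the cycle graph `C_n` (`n ≥ 3`) are `(1^{n-2}, 0, 0)`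
when `3 ∣ n`, and `(1^{n-1}, 3)` otherwise. -/
theorem stmt_13 (n : ℕ) (hn : 3 ≤ n) :
    ∃ U V : Matrix (Fin n) (Fin n) ℤ, IsUnit U.det ∧ IsUnit V.det ∧
      U * cycleActivation n * V =
        Matrix.diagonal (fun i : Fin n =>
          if 3 ∣ n then (if n - 2 ≤ (i : ℕ) then 0 else 1)
          else (if (i : ℕ) = n - 1 then 3 else 1)) := by
  have : NeZero n := ⟨by omega⟩
  rw [ite_three_dvd_eq_diagLastTwo hn]
  split_ifs with h3
  · exact cycleActivation_equivalent_of_natCast_eq_zero hn ((ZMod.natCast_eq_zero_iff n 3).2 h3)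
  · obtain hr | hr | hr : (n : ZMod 3) = 0 ∨ (n : ZMod 3) = 1 ∨ (n : ZMod 3) = 2 := by
      generalize (n : ZMod 3) = r; revert r; decide
    · exact absurd ((ZMod.natCast_eq_zero_iff n 3).1 hr) h3
    · exact cycleActivation_equivalent_of_natCast_eq_one hn hr
    · exact cycleActivation_equivalent_of_natCast_eq_two hn hr
end

section
/- Let Γ be a finite simple graph containing a vertex u with neighbors v and w such that u is the only common neighbor of v and w (in closed neighborhoods: B(v) ∩ B(w) = {u}). Then for every group G and all g, h ∈ G, the element of G^n with [g,h] in coordinate u and identity elsewhere lies in G^Γ; indeed it equals [g^v, h^w]. -/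
open scoped commutatorElement

/- The proof: coordinatewise, `[g^v, h^w]` is `[g, h]` at `u ∈ B(v) ∩ B(w)` and, at every other
vertex, a commutator with a trivial entry, since no other vertex lies in both `B(v)` and `B(w)`. -/

theorem Pi.commutatorElement_eq_mulSingle {V G : Type*} [DecidableEq V] [Group G]
    {f₁ f₂ : V → G} {u : V} (h : ∀ z ≠ u, f₁ z = 1 ∨ f₂ z = 1) :
    ⁅f₁, f₂⁆ = Pi.mulSingle u ⁅f₁ u, f₂ u⁆ := by
  funext z
  change ⁅f₁ z, f₂ z⁆ = _
  by_cases hz : z = u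
  · subst hz
    rw [Pi.mulSingle_eq_same]
  · rw [Pi.mulSingle_eq_of_ne hz]
    rcases h z hz with h₁ | h₂
    · rw [h₁, commutatorElement_one_left]
    · rw [h₂, commutatorElement_one_right]

section click

variable {V : Type*} (Γ : SimpleGraph V) {G : Type*} [Group G]

theorem click_apply_of_mem {g : G} {v z : V} (hz : z = v ∨ Γ.Adj v z) : click Γ g v z = g :=
  if_pos hz

theorem click_apply_of_notMem {g : G} {v z : V} (hz : ¬(z = v ∨ Γ.Adj v z)) :
    click Γ g v z = 1 :=
  if_neg hz

theorem click_mem_graphPower (g : G) (v : V) : click Γ g v ∈ graphPower Γ G :=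
  Subgroup.subset_closure ⟨g, v, rfl⟩

theorem commutatorElement_click_mem_graphPower (g h : G) (v w : V) :
    ⁅click Γ g v, click Γ h w⁆ ∈ graphPower Γ G :=
  Subgroup.commutator_le_self (graphPower Γ G) <|
    Subgroup.commutator_mem_commutator (click_mem_graphPower Γ g v) (click_mem_graphPower Γ h w)

theorem commutatorElement_click_eq_mulSingle [DecidableEq V] {u v w : V}
    (hB : ∀ z, ((z = v ∨ Γ.Adj v z) ∧ (z = w ∨ Γ.Adj w z)) ↔ z = u) (g h : G) :
    ⁅click Γ g v, click Γ h w⁆ = Pi.mulSingle u ⁅g, h⁆ := by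
  obtain ⟨hv, hw⟩ := (hB u).2 rfl
  rw [Pi.commutatorElement_eq_mulSingle (u := u), click_apply_of_mem Γ hv,
    click_apply_of_mem Γ hw]
  intro z hz
  by_cases hzv : z = v ∨ Γ.Adj v z
  · exact .inr (click_apply_of_notMem Γ fun hzw => hz ((hB z).1 ⟨hzv, hzw⟩))
  · exact .inl (click_apply_of_notMem Γ hzv)

end click

open Classical in
theorem stmt_16_general {V : Type*} (Γ : SimpleGraph V) (u v w : V)
    (hB : ∀ z, ((z = v ∨ Γ.Adj v z) ∧ (z = w ∨ Γ.Adj w z)) ↔ z = u)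
    (G : Type*) [Group G] (g h : G) :
    (fun z => if z = u then ⁅g, h⁆ else 1) ∈ graphPower Γ G ∧
      (fun z => if z = u then ⁅g, h⁆ else 1) = ⁅click Γ g v, click Γ h w⁆ := by
  have heq : (fun z => if z = u then ⁅g, h⁆ else 1) = ⁅click Γ g v, click Γ h w⁆ := by
    rw [commutatorElement_click_eq_mulSingle Γ hB]
    funext z
    simp only [Pi.mulSingle_apply]
  exact ⟨heq ▸ commutatorElement_click_mem_graphPower Γ g h v w, heq⟩

open Classical in
/-- If `u` has neighbors `v`, `w` whose closed neighborhoods intersect exactly in `{u}`,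
then for all `g, h ∈ G` the element with `[g,h]` at `u` and identity elsewhere lies in
`G^Γ`; indeed it equals `[g^v, h^w]`. -/
theorem stmt_16 {V : Type*} [Fintype V] (Γ : SimpleGraph V) (u v w : V)
    (huv : Γ.Adj u v) (huw : Γ.Adj u w)
    (hB : ∀ z, ((z = v ∨ Γ.Adj v z) ∧ (z = w ∨ Γ.Adj w z)) ↔ z = u)
    (G : Type*) [Group G] (g h : G) :
    (fun z => if z = u then ⁅g, h⁆ else 1) ∈ graphPower Γ G ∧
      (fun z => if z = u then ⁅g, h⁆ else 1) = ⁅click Γ g v, click Γ h w⁆ :=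
  stmt_16_general Γ u v w hB G g h
end

section
/- Let Γ be a connected triangle-free finite simple graph and G a group. If there exists a vertex v such that for all g, h ∈ G the element [g,h]^{e_v} (with [g,h] at coordinate v and identity elsewhere) lies in G^Γ, then [g,h]^{e_u} ∈ G^Γ for every vertex u and all g, h ∈ G; consequently [G,G]^{|Γ|} ≤ G^Γ, i.e., Γ is G-RA. -/
open scoped commutatorElement

/-!
For adjacent `u, w` in a triangle-free graph, `[g^u, h^w]` equals `[g,h]^{e_u} [g,h]^{e_w}`, so
`[g,h]^{e_u} ∈ G^Γ` for all `g, h` forces `[g,h]^{e_w} ∈ G^Γ`; by connectivity this spreads from `v`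
to every vertex. The elements `[g,h]^{e_u}` generate `[G,G]^{|Γ|}`, as `Γ` is finite.
-/

namespace SimpleGraph

variable {V G : Type*} [Group G] {Γ : SimpleGraph V}

theorem click_apply_self (g : G) (u : V) : click Γ g u u = g :=
  if_pos (.inl rfl)

theorem click_apply_of_adj (g : G) {u z : V} (hadj : Γ.Adj u z) : click Γ g u z = g :=
  if_pos (.inr hadj)

theorem click_apply_of_not_adj (g : G) {u z : V} (hne : z ≠ u) (hadj : ¬Γ.Adj u z) :
    click Γ g u z = 1 :=
  if_neg (not_or.2 ⟨hne, hadj⟩)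

theorem click_mem_graphPower (g : G) (u : V) : click Γ g u ∈ graphPower Γ G :=
  Subgroup.subset_closure ⟨g, u, rfl⟩

theorem commutatorElement_click_mem_graphPower (g h : G) (u w : V) :
    ⁅click Γ g u, click Γ h w⁆ ∈ graphPower Γ G := by
  have hg := click_mem_graphPower (Γ := Γ) g u
  have hh := click_mem_graphPower (Γ := Γ) h w
  rw [commutatorElement_def]
  exact mul_mem (mul_mem (mul_mem hg hh) (inv_mem hg)) (inv_mem hh)

variable [DecidableEq V]

/-- `B(u) ∩ B(w) = {u, w}`: a common neighbour of `u` and `w` would close a triangle. -/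
theorem commutatorElement_click_click_of_adj (htri : Γ.CliqueFree 3) {u w : V}
    (hadj : Γ.Adj u w) (g h : G) :
    ⁅click Γ g u, click Γ h w⁆ = Pi.mulSingle u ⁅g, h⁆ * Pi.mulSingle w ⁅g, h⁆ := by
  funext z
  change ⁅click Γ g u z, click Γ h w z⁆ = _
  simp only [Pi.mul_apply, Pi.mulSingle_apply]
  by_cases hzu : z = u
  · subst hzu
    simp [click_apply_self, click_apply_of_adj h hadj.symm, hadj.ne]
  by_cases hzw : z = w
  · subst hzw
    simp [click_apply_self, click_apply_of_adj g hadj, hzu]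
  by_cases huz : Γ.Adj u z
  · have hwz : ¬Γ.Adj w z := fun hwz => htri {u, w, z} (is3Clique_triple_iff.2 ⟨hadj, huz, hwz⟩)
    simp [click_apply_of_not_adj h hzw hwz, hzu, hzw]
  · simp [click_apply_of_not_adj g hzu huz, hzu, hzw]

theorem mulSingle_commutatorElement_mem_of_adj (htri : Γ.CliqueFree 3) {u w : V}
    (hadj : Γ.Adj u w) (hu : ∀ g h : G, Pi.mulSingle u ⁅g, h⁆ ∈ graphPower Γ G) (g h : G) :
    Pi.mulSingle w ⁅g, h⁆ ∈ graphPower Γ G := by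
  have hclick := commutatorElement_click_mem_graphPower (Γ := Γ) g h u w
  rw [commutatorElement_click_click_of_adj htri hadj] at hclick
  exact (Subgroup.mul_mem_cancel_left _ (hu g h)).1 hclick

theorem mulSingle_commutatorElement_mem_of_reachable (htri : Γ.CliqueFree 3) {u w : V}
    (hreach : Γ.Reachable u w) (hu : ∀ g h : G, Pi.mulSingle u ⁅g, h⁆ ∈ graphPower Γ G) :
    ∀ g h : G, Pi.mulSingle w ⁅g, h⁆ ∈ graphPower Γ G := by
  obtain ⟨p⟩ := hreach
  induction p with
  | nil => exact hu
  | cons hadj _ ih => exact ih (mulSingle_commutatorElement_mem_of_adj htri hadj hu)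

theorem pi_commutator_le_of_mulSingle_commutatorElement_mem [Finite V] {H : Subgroup (V → G)}
    (hH : ∀ (u : V) (g h : G), Pi.mulSingle u ⁅g, h⁆ ∈ H) :
    Subgroup.pi Set.univ (fun _ => commutator G) ≤ H := by
  refine Subgroup.pi_le_iff.2 fun u => Subgroup.map_le_iff_le_comap.2 ?_
  rw [commutator_def, Subgroup.commutator_le]
  exact fun g _ h _ => hH u g h

end SimpleGraph

open SimpleGraph

open Classical in
/-- In a connected triangle-free graph, if some vertex `v` satisfies
`[g,h]^{e_v} ∈ G^Γ` for all `g, h`, then the same holds at every vertex, and consequently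
`[G,G]^{|Γ|} ≤ G^Γ`, i.e. `Γ` is `G`-RA. -/
theorem stmt_17 {V : Type*} [Fintype V] (Γ : SimpleGraph V)
    (hconn : Γ.Connected) (htri : Γ.CliqueFree 3)
    (G : Type*) [Group G] (v : V)
    (hv : ∀ g h : G, (fun z => if z = v then ⁅g, h⁆ else 1) ∈ graphPower Γ G) :
    (∀ (u : V) (g h : G),
        (fun z => if z = u then ⁅g, h⁆ else 1) ∈ graphPower Γ G) ∧
      (∀ f : V → G, (∀ i, f i ∈ commutator G) → f ∈ graphPower Γ G) := by
  have hsingle (u : V) (c : G) : (fun z => if z = u then c else 1) = Pi.mulSingle u c :=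
    funext fun z => (Pi.mulSingle_apply u c z).symm
  simp only [hsingle] at hv ⊢
  have hall (u : V) : ∀ g h : G, Pi.mulSingle u ⁅g, h⁆ ∈ graphPower Γ G :=
    mulSingle_commutatorElement_mem_of_reachable htri (hconn.preconnected v u) hv
  exact ⟨hall, fun f hf => pi_commutator_le_of_mulSingle_commutatorElement_mem hall
    ((Subgroup.mem_pi _).2 fun i _ => hf i)⟩
end

section
/- Every connected finite simple graph Γ with at least 3 vertices and girth at least 5 is RA: for every group G, the group generated by the commutators [g^u, h^v] over distinct vertices u ≠ v and g, h ∈ G equals [G,G]^{|Γ|}; in particular [G,G]^{|Γ|} ≤ G^Γ. -/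
open scoped commutatorElement

/-
For distinct `u, v` the commutator `[g^u, h^v]` is `[g, h]` on `B(u) ∩ B(v)` and trivial elsewhere.
Girth at least 5 makes these intersections tiny: two neighbours `u ≠ v` of `w` have
`B(u) ∩ B(v) = {w}`, and an edge `wx` has `B(w) ∩ B(x) = {w, x}`. So `[g, h]` can be placed on a
single vertex `w` directly when `w` has two neighbours; a leaf `w` with neighbour `x` is handled
by placing it on `{w, x}` and then removing it from `x`, which, as `Γ` is connected with at least
three vertices, has a second neighbour.
-/

theorem Set.commutatorElement_mulIndicator_const {ι G : Type*} [Group G] (s t : Set ι) (g h : G) :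
    ⁅s.mulIndicator (fun _ => g), t.mulIndicator (fun _ => h)⁆ =
      (s ∩ t).mulIndicator (fun _ => ⁅g, h⁆) := by
  classical
  funext i
  by_cases hs : i ∈ s <;> by_cases ht : i ∈ t <;>
    simp [commutatorElement_def, hs, ht]

namespace SimpleGraph

variable {V : Type*} {Γ : SimpleGraph V}

theorem not_adj_of_five_le_girth (hg : 5 ≤ Γ.girth) {a b c : V} (hab : Γ.Adj a b)
    (hbc : Γ.Adj b c) : ¬Γ.Adj c a := by
  intro hca
  have hcycle : (Walk.cons hab (.cons hbc (.cons hca .nil)) : Γ.Walk a a).IsCycle := by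
    rw [Walk.cons_isCycle_iff]
    constructor
    · simp [Walk.isPath_def, hbc.ne, hca.ne, hab.ne']
    · simp [hab.ne, hbc.ne, hab.ne', hca.ne']
  have := hg.trans (girth_le_length hcycle)
  simp at this

theorem commonNeighbors_subsingleton_of_five_le_girth (hg : 5 ≤ Γ.girth) {u v : V}
    (huv : u ≠ v) : (Γ.commonNeighbors u v).Subsingleton := by
  intro w hw x hx
  obtain ⟨huw, hvw⟩ := Γ.mem_commonNeighbors.mp hw
  obtain ⟨hux, hvx⟩ := Γ.mem_commonNeighbors.mp hx
  by_contra hwx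
  have hcycle :
      (Walk.cons huw (.cons hvw.symm (.cons hvx (.cons hux.symm .nil))) : Γ.Walk u u).IsCycle := by
    rw [Walk.cons_isCycle_iff]
    constructor
    · simp [Walk.isPath_def, hvx.ne, huw.ne', hvw.ne', hux.ne', huv.symm, hwx]
    · simp [huw.ne, hux.ne, huw.ne', hvw.ne', huv, hwx]
  have := hg.trans (girth_le_length hcycle)
  simp at this

theorem closedNeighborSet_inter_of_adj (hg : 5 ≤ Γ.girth) {w x : V} (hwx : Γ.Adj w x) :
    insert w (Γ.neighborSet w) ∩ insert x (Γ.neighborSet x) = {w, x} := by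
  ext y
  simp only [Set.mem_inter_iff, Set.mem_insert_iff, mem_neighborSet, Set.mem_singleton_iff]
  constructor
  · rintro ⟨rfl | hwy, rfl | hxy⟩
    · exact .inl rfl
    · exact .inl rfl
    · exact .inr rfl
    · exact (not_adj_of_five_le_girth hg hwx hxy hwy.symm).elim
  · rintro (rfl | rfl)
    · exact ⟨.inl rfl, .inr hwx.symm⟩
    · exact ⟨.inr hwx, .inl rfl⟩

theorem closedNeighborSet_inter_of_adj_of_adj (hg : 5 ≤ Γ.girth) {w u v : V} (hwu : Γ.Adj w u)
    (hwv : Γ.Adj w v) (huv : u ≠ v) :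
    insert u (Γ.neighborSet u) ∩ insert v (Γ.neighborSet v) = {w} := by
  ext y
  simp only [Set.mem_inter_iff, Set.mem_insert_iff, mem_neighborSet, Set.mem_singleton_iff]
  constructor
  · rintro ⟨rfl | huy, rfl | hvy⟩
    · exact (huv rfl).elim
    · exact (not_adj_of_five_le_girth hg hwu hvy.symm hwv.symm).elim
    · exact (not_adj_of_five_le_girth hg hwv huy.symm hwu.symm).elim
    · exact commonNeighbors_subsingleton_of_five_le_girth hg huv ⟨huy, hvy⟩
        ⟨hwu.symm, hwv.symm⟩
  · rintro rfl
    exact ⟨.inr hwu.symm, .inr hwv.symm⟩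

theorem Connected.exists_adj_ne_of_adj [Fintype V] (hconn : Γ.Connected)
    (hcard : 3 ≤ Fintype.card V) {w x : V} (hwx : Γ.Adj w x) (hleaf : ∀ y, Γ.Adj w y → y = x) :
    ∃ y, Γ.Adj x y ∧ y ≠ w := by
  classical
  obtain ⟨z, -, hz⟩ := Finset.exists_mem_notMem_of_card_lt_card
    (s := {w, x}) (t := Finset.univ) ((Finset.card_le_two).trans_lt hcard)
  obtain ⟨⟨⟨a, y⟩, hay⟩, -, ha, hy⟩ :=
    (hconn.preconnected w z).some.exists_boundary_dart ({w, x} : Finset V) (by simp) hz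
  simp only [Finset.coe_insert, Finset.coe_singleton, Set.mem_insert_iff,
    Set.mem_singleton_iff, not_or] at ha hy
  rcases ha with rfl | rfl
  · exact (hy.2 (hleaf y hay)).elim
  · exact ⟨y, hay, hy.1⟩

end SimpleGraph

section Clicks

open SimpleGraph

variable {V : Type*} {Γ : SimpleGraph V} {G : Type*} [Group G]

theorem click_eq_mulIndicator (g : G) (v : V) :
    click Γ g v = (insert v (Γ.neighborSet v)).mulIndicator (fun _ => g) := by
  classical
  funext w
  simp [click, Set.mulIndicator_apply]

theorem commutatorElement_click_click_of_adj [DecidableEq V] (hg : 5 ≤ Γ.girth) {w x : V}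
    (hwx : Γ.Adj w x) (g h : G) :
    ⁅click Γ g w, click Γ h x⁆ = Pi.mulSingle w ⁅g, h⁆ * Pi.mulSingle x ⁅g, h⁆ := by
  rw [click_eq_mulIndicator, click_eq_mulIndicator, Set.commutatorElement_mulIndicator_const,
    closedNeighborSet_inter_of_adj hg hwx, Set.insert_eq,
    Set.mulIndicator_union_of_disjoint (Set.disjoint_singleton.mpr hwx.ne),
    Set.mulIndicator_singleton, Set.mulIndicator_singleton]
  rfl

theorem commutatorElement_click_click_of_adj_of_adj [DecidableEq V] (hg : 5 ≤ Γ.girth)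
    {w u v : V} (hwu : Γ.Adj w u) (hwv : Γ.Adj w v) (huv : u ≠ v) (g h : G) :
    ⁅click Γ g u, click Γ h v⁆ = Pi.mulSingle w ⁅g, h⁆ := by
  rw [click_eq_mulIndicator, click_eq_mulIndicator, Set.commutatorElement_mulIndicator_const,
    closedNeighborSet_inter_of_adj_of_adj hg hwu hwv huv, Set.mulIndicator_singleton]

variable (Γ G) in
noncomputable def clickCommutators : Set (V → G) :=
  {f | ∃ (g h : G) (u v : V), u ≠ v ∧ f = ⁅click Γ g u, click Γ h v⁆}

theorem clickCommutators_subset_pi_commutator :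
    clickCommutators Γ G ⊆ Subgroup.pi Set.univ (fun _ : V => commutator G) := by
  rintro _ ⟨g, h, u, v, -, rfl⟩ w -
  exact Subgroup.commutator_mem_commutator (Subgroup.mem_top _) (Subgroup.mem_top _)

theorem clickCommutators_subset_graphPower : clickCommutators Γ G ⊆ graphPower Γ G := by
  rintro _ ⟨g, h, u, v, -, rfl⟩
  have hu : click Γ g u ∈ graphPower Γ G := Subgroup.subset_closure ⟨g, u, rfl⟩
  have hv : click Γ h v ∈ graphPower Γ G := Subgroup.subset_closure ⟨h, v, rfl⟩
  rw [SetLike.mem_coe, commutatorElement_def]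
  exact mul_mem (mul_mem (mul_mem hu hv) (inv_mem hu)) (inv_mem hv)

theorem mulSingle_commutatorElement_mem_closure_clickCommutators [Fintype V] [DecidableEq V]
    (hconn : Γ.Connected) (hcard : 3 ≤ Fintype.card V) (hg : 5 ≤ Γ.girth) (w : V) (g h : G) :
    Pi.mulSingle w ⁅g, h⁆ ∈ Subgroup.closure (clickCommutators Γ G) := by
  have mem_of_adj_of_adj {w u v : V} (hwu : Γ.Adj w u) (hwv : Γ.Adj w v) (huv : u ≠ v) :
      Pi.mulSingle w ⁅g, h⁆ ∈ Subgroup.closure (clickCommutators Γ G) := by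
    rw [← commutatorElement_click_click_of_adj_of_adj hg hwu hwv huv]
    exact Subgroup.subset_closure ⟨g, h, u, v, huv, rfl⟩
  have : Nontrivial V := Fintype.one_lt_card_iff_nontrivial.mp (by omega)
  obtain ⟨x, hwx⟩ := hconn.preconnected.exists_adj_of_nontrivial w
  by_cases hleaf : ∀ u, Γ.Adj w u → u = x
  · obtain ⟨y, hxy, hyw⟩ := hconn.exists_adj_ne_of_adj hcard hwx hleaf
    have hedge : ⁅click Γ g w, click Γ h x⁆ ∈ Subgroup.closure (clickCommutators Γ G) :=
      Subgroup.subset_closure ⟨g, h, w, x, hwx.ne, rfl⟩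
    rw [commutatorElement_click_click_of_adj hg hwx] at hedge
    exact (mul_mem_cancel_right (mem_of_adj_of_adj hwx.symm hxy hyw.symm)).mp hedge
  · push Not at hleaf
    obtain ⟨u, hwu, hux⟩ := hleaf
    exact mem_of_adj_of_adj hwu hwx hux

theorem pi_commutator_le_closure_clickCommutators [Fintype V] (hconn : Γ.Connected)
    (hcard : 3 ≤ Fintype.card V) (hg : 5 ≤ Γ.girth) :
    Subgroup.pi Set.univ (fun _ : V => commutator G) ≤ Subgroup.closure (clickCommutators Γ G) := by
  classical
  refine Subgroup.pi_le_iff.mpr fun w => Subgroup.map_le_iff_le_comap.mpr ?_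
  rw [commutator_eq_closure, Subgroup.closure_le]
  rintro _ ⟨g, h, rfl⟩
  exact mulSingle_commutatorElement_mem_closure_clickCommutators hconn hcard hg w g h

end Clicks

/-- A connected graph with at least 3 vertices and girth at least 5 is strongly RA:
for every group `G`, the subgroup generated by the commutators `[g^u, h^v]` over distinct
vertices `u ≠ v` equals `[G,G]^{|Γ|}`; in particular `[G,G]^{|Γ|} ≤ G^Γ`. -/
theorem stmt_18 {V : Type*} [Fintype V] (Γ : SimpleGraph V)
    (hconn : Γ.Connected) (hcard : 3 ≤ Fintype.card V) (hgirth : 5 ≤ Γ.girth)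
    (G : Type*) [Group G] :
    Subgroup.closure {f : V → G | ∃ (g h : G) (u v : V), u ≠ v ∧
        f = ⁅click Γ g u, click Γ h v⁆} =
      Subgroup.pi Set.univ (fun _ : V => commutator G) ∧
    Subgroup.pi Set.univ (fun _ : V => commutator G) ≤ graphPower Γ G := by
  have hclosure : Subgroup.closure (clickCommutators Γ G) =
      Subgroup.pi Set.univ (fun _ : V => commutator G) :=
    le_antisymm (Subgroup.closure_le _ |>.mpr clickCommutators_subset_pi_commutator)
      (pi_commutator_le_closure_clickCommutators hconn hcard hgirth)
  refine ⟨hclosure, ?_⟩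
  rw [← hclosure, Subgroup.closure_le]
  exact clickCommutators_subset_graphPower
end
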